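/- For every instance of the Budget Optimization problem there exists a uniform strategy A with spend(A) ≤ B and traffic(A) ≥ (1 − 1/e)·OPT, where OPT is the per-query optimum; in particular the best uniform strategy is a (1 − 1/e)-approximation to the optimum of the Budget Optimization problem. -/

import Mathlib

open MeasureTheory

/-!
Budget Optimization instances.  A query landscape for query `q` has `S q + 1`
positions with click-through rates `α q 0 ≥ … ≥ α q (S q) = 0` and competing
bids `b q 0 ≥ … ≥ b q (S q) = 0`.  Keywords are `Fin nK`, queries `Fin nQ`,
and `nbrs q` is the (nonempty) set of keywords matching query `q`.
-/

noncomputable def landPos (n : ℕ) (b : Fin (n + 1) → ℝ) (x : ℝ) : Fin (n + 1) :=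
  if h : (Finset.univ.filter (fun i => b i ≤ x)).Nonempty
  then (Finset.univ.filter (fun i => b i ≤ x)).min' h
  else Fin.last n

noncomputable def landClicks (n : ℕ) (α b : Fin (n + 1) → ℝ) (x : ℝ) : ℝ :=
  α (landPos n b x)

noncomputable def landCost (n : ℕ) (α b : Fin (n + 1) → ℝ) (x : ℝ) : ℝ :=
  α (landPos n b x) * b (landPos n b x)

/-- An instance of the Budget Optimization problem. -/
structure BOInstance where
  nK : ℕ
  nQ : ℕ
  nbrs : Fin nQ → Finset (Fin nK)
  nbrs_nonempty : ∀ q, (nbrs q).Nonempty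
  S : Fin nQ → ℕ
  α : (q : Fin nQ) → Fin (S q + 1) → ℝ
  b : (q : Fin nQ) → Fin (S q + 1) → ℝ
  α_anti : ∀ q, Antitone (α q)
  b_anti : ∀ q, Antitone (b q)
  α_last : ∀ q, α q (Fin.last (S q)) = 0
  b_last : ∀ q, b q (Fin.last (S q)) = 0
  budget : ℝ
  budget_nonneg : 0 ≤ budget

/-- The effective bid on query `q` induced by the keyword-bid vector `v`. -/
noncomputable def effBid (I : BOInstance) (v : Fin I.nK → ℝ) (q : Fin I.nQ) : ℝ :=
  (I.nbrs q).sup' (I.nbrs_nonempty q) v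

noncomputable def spendVec (I : BOInstance) (v : Fin I.nK → ℝ) : ℝ :=
  ∑ q, landCost (I.S q) (I.α q) (I.b q) (effBid I v q)

noncomputable def trafficVec (I : BOInstance) (v : Fin I.nK → ℝ) : ℝ :=
  ∑ q, landClicks (I.S q) (I.α q) (I.b q) (effBid I v q)

/-- Expected spend of a distribution over keyword-bid vectors. -/
noncomputable def spendD (I : BOInstance) (μ : Measure (Fin I.nK → ℝ)) : ℝ :=
  ∫ v, spendVec I v ∂μ

/-- Expected traffic of a distribution over keyword-bid vectors. -/
noncomputable def trafficD (I : BOInstance) (μ : Measure (Fin I.nK → ℝ)) : ℝ :=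
  ∫ v, trafficVec I v ∂μ

/-- A strategy: a probability distribution over nonnegative keyword-bid vectors. -/
def IsStrategy (I : BOInstance) (μ : Measure (Fin I.nK → ℝ)) : Prop :=
  IsProbabilityMeasure μ ∧ ∀ᵐ v ∂μ, ∀ k, 0 ≤ v k

/-- A uniform strategy: supported on constant (uniform) bid vectors. -/
def IsUniform (I : BOInstance) (μ : Measure (Fin I.nK → ℝ)) : Prop :=
  IsStrategy I μ ∧ ∀ᵐ v ∂μ, ∃ x : ℝ, 0 ≤ x ∧ v = fun _ => x

/-- A two-bid strategy: a uniform strategy supported on at most two bid vectors. -/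
def IsTwoBid (I : BOInstance) (μ : Measure (Fin I.nK → ℝ)) : Prop :=
  ∃ x y l : ℝ, 0 ≤ x ∧ 0 ≤ y ∧ 0 ≤ l ∧ l ≤ 1 ∧
    μ = ENNReal.ofReal l • Measure.dirac (fun _ => x) +
        ENNReal.ofReal (1 - l) • Measure.dirac (fun _ => y)

/-- A single-bid strategy: a uniform strategy supported on at most one nonzero
bid vector together possibly with the zero vector. -/
def IsSingleBid (I : BOInstance) (μ : Measure (Fin I.nK → ℝ)) : Prop :=
  ∃ x l : ℝ, 0 ≤ x ∧ 0 ≤ l ∧ l ≤ 1 ∧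
    μ = ENNReal.ofReal l • Measure.dirac (fun _ => x) +
        ENNReal.ofReal (1 - l) • Measure.dirac (fun _ => (0 : ℝ))

/-!
Let `K t` be the number of clicks won by the uniform bid `t` (`uniformClicks`), `u s` the least
uniform bid winning `s` clicks (`bidForClicks`), and `Φ c = ∫₀ᶜ u` (`clickCost`). A layer-cake
argument shows that per-query bids winning `W` clicks cost at least `Φ W`; as `Φ` is convex,
Jensen's inequality gives `Φ OPT ≤ B`. Now draw a click level `s ∈ (OPT/e, OPT]` with density
`1 / K (u s)`, bid `u s`, and bid `0` with the remaining probability, which is nonnegative because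
`K (u s) ≥ s` and `∫ ds / s = 1` over that interval. Since a bid `t` costs at most `K t * t`, this
spends at most `∫ u ≤ Φ OPT ≤ B`, and it wins `OPT - OPT/e` expected clicks.
-/

open Set Filter Topology

section Landscape

variable {n : ℕ} {α b : Fin (n + 1) → ℝ}

lemma Antitone.nonneg_of_apply_last_eq_zero {f : Fin (n + 1) → ℝ} (hf : Antitone f)
    (hf0 : f (Fin.last n) = 0) (i : Fin (n + 1)) : 0 ≤ f i :=
  hf0 ▸ hf (Fin.le_last i)

lemma landPos_le_of_le {x : ℝ} {i : Fin (n + 1)} (h : b i ≤ x) : landPos n b x ≤ i := by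
  have hne : (Finset.univ.filter fun j => b j ≤ x).Nonempty := ⟨i, by simpa⟩
  rw [landPos, dif_pos hne]
  exact Finset.min'_le _ _ (by simpa)

lemma apply_landPos_le {x : ℝ} {i : Fin (n + 1)} (h : b i ≤ x) : b (landPos n b x) ≤ x := by
  have hne : (Finset.univ.filter fun j => b j ≤ x).Nonempty := ⟨i, by simpa⟩
  rw [landPos, dif_pos hne]
  simpa using Finset.min'_mem _ hne

lemma landPos_antitone : Antitone (landPos n b) := by
  intro x y hxy
  by_cases h : ∃ i, b i ≤ x
  · obtain ⟨i, hi⟩ := h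
    exact landPos_le_of_le ((apply_landPos_le hi).trans hxy)
  · have hempty : ¬ (Finset.univ.filter fun j => b j ≤ x).Nonempty := by simpa using h
    unfold landPos
    rw [dif_neg hempty]
    exact Fin.le_last _

lemma landPos_eventually_eq (b : Fin (n + 1) → ℝ) (x : ℝ) :
    ∀ᶠ y in 𝓝[≥] x, landPos n b y = landPos n b x := by
  have hbids : ∀ᶠ y in 𝓝 x, ∀ i, x < b i → y < b i := eventually_all.2 fun i => by
    by_cases hi : x < b i
    · exact (eventually_lt_nhds hi).mono fun y hy _ => hy
    · exact Eventually.of_forall fun y h => absurd h hi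
  filter_upwards [nhdsWithin_le_nhds hbids, self_mem_nhdsWithin] with y hy hxy
  have : (Finset.univ.filter fun i => b i ≤ y) = Finset.univ.filter fun i => b i ≤ x := by
    ext i
    simp only [Finset.mem_filter, Finset.mem_univ, true_and]
    exact ⟨fun hiy => not_lt.1 fun hxi => (hy i hxi).not_ge hiy, fun hix => hix.trans hxy⟩
  simp only [landPos, this]

variable (hα : Antitone α) (hα0 : α (Fin.last n) = 0)
include hα

lemma landClicks_monotone : Monotone (landClicks n α b) :=
  hα.comp landPos_antitone

lemma landClicks_le (x : ℝ) : landClicks n α b x ≤ α 0 :=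
  hα (Fin.zero_le _)

include hα0

lemma landClicks_nonneg (x : ℝ) : 0 ≤ landClicks n α b x :=
  hα.nonneg_of_apply_last_eq_zero hα0 _

lemma landCost_le_landClicks_mul (hb0 : b (Fin.last n) = 0) {x : ℝ} (hx : 0 ≤ x) :
    landCost n α b x ≤ landClicks n α b x * x :=
  mul_le_mul_of_nonneg_left (apply_landPos_le (hb0 ▸ hx)) (landClicks_nonneg hα hα0 x)

lemma ofReal_landClicks_sub_le_indicator (β t : ℝ) :
    ENNReal.ofReal (landClicks n α b β - landClicks n α b t) ≤
      (Iio (b (landPos n b β))).indicator (fun _ => ENNReal.ofReal (landClicks n α b β)) t := by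
  by_cases ht : t < b (landPos n b β)
  · rw [indicator_of_mem (mem_Iio.2 ht)]
    exact ENNReal.ofReal_le_ofReal (sub_le_self _ (landClicks_nonneg hα hα0 t))
  · rw [indicator_of_notMem (notMem_Iio.2 (not_lt.1 ht)), nonpos_iff_eq_zero,
      ENNReal.ofReal_eq_zero, sub_nonpos]
    exact hα (landPos_le_of_le (not_lt.1 ht))

lemma lintegral_indicator_eq_ofReal_landCost (β : ℝ) :
    ∫⁻ t in Ioi 0, (Iio (b (landPos n b β))).indicator
      (fun _ => ENNReal.ofReal (landClicks n α b β)) t = ENNReal.ofReal (landCost n α b β) := by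
  rw [lintegral_indicator_const measurableSet_Iio, Measure.restrict_apply measurableSet_Iio,
    Iio_inter_Ioi, Real.volume_Ioo, sub_zero, ← ENNReal.ofReal_mul (landClicks_nonneg hα hα0 β)]
  rfl

variable (hb : Antitone b) (hb0 : b (Fin.last n) = 0)
include hb hb0

lemma landCost_nonneg (x : ℝ) : 0 ≤ landCost n α b x :=
  mul_nonneg (landClicks_nonneg hα hα0 x) (hb.nonneg_of_apply_last_eq_zero hb0 _)

lemma landCost_le (x : ℝ) : landCost n α b x ≤ α 0 * b 0 :=
  mul_le_mul (landClicks_le hα x) (hb (Fin.zero_le _))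
    (hb.nonneg_of_apply_last_eq_zero hb0 _) (hα.nonneg_of_apply_last_eq_zero hα0 0)

lemma landCost_monotone : Monotone (landCost n α b) :=
  Monotone.mul (landClicks_monotone hα) (hb.comp landPos_antitone) (landClicks_nonneg hα hα0)
    fun _ => hb.nonneg_of_apply_last_eq_zero hb0 _

omit hα hα0 in
lemma landCost_zero : landCost n α b 0 = 0 := by
  have hprice : b (landPos n b 0) = 0 :=
    le_antisymm (apply_landPos_le hb0.le) (hb.nonneg_of_apply_last_eq_zero hb0 _)
  rw [landCost, hprice, mul_zero]

end Landscape

theorem Monotone.mul_sub_le_intervalIntegral {f : ℝ → ℝ} (hf : Monotone f) (x y : ℝ) :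
    f x * (y - x) ≤ ∫ s in x..y, f s := by
  rcases le_total x y with hxy | hyx
  · calc f x * (y - x) = ∫ _ in x..y, f x := by simp [mul_comm]
      _ ≤ ∫ s in x..y, f s := intervalIntegral.integral_mono_on hxy intervalIntegrable_const
          hf.intervalIntegrable fun s hs => hf hs.1
  · have : ∫ s in y..x, f s ≤ f x * (x - y) :=
      calc ∫ s in y..x, f s ≤ ∫ _ in y..x, f x := intervalIntegral.integral_mono_on hyx
            hf.intervalIntegrable intervalIntegrable_const fun s hs => hf hs.2
        _ = f x * (x - y) := by simp [mul_comm]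
    rw [intervalIntegral.integral_symm]
    linarith

theorem map_integral_le_integral_of_supporting_line {Ω : Type*} [MeasurableSpace Ω]
    {ν : Measure Ω} [IsProbabilityMeasure ν] {φ : ℝ → ℝ} {X : Ω → ℝ} (m : ℝ)
    (hφ : ∀ y, φ (∫ ω, X ω ∂ν) + m * (y - ∫ ω, X ω ∂ν) ≤ φ y)
    (hX : Integrable X ν) (hφX : Integrable (fun ω => φ (X ω)) ν) :
    φ (∫ ω, X ω ∂ν) ≤ ∫ ω, φ (X ω) ∂ν := by
  set E := ∫ ω, X ω ∂ν
  have hdev : Integrable (fun ω => m * (X ω - E)) ν := (hX.sub (integrable_const E)).const_mul m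
  calc φ E = ∫ ω, φ E + m * (X ω - E) ∂ν := by
        rw [integral_add (integrable_const _) hdev, integral_const_mul,
          integral_sub hX (integrable_const E)]
        simp [E]
    _ ≤ ∫ ω, φ (X ω) ∂ν := integral_mono ((integrable_const _).add hdev) hφX fun ω => hφ (X ω)

lemma measurable_const_pi {α : Type*} [MeasurableSpace α] (ι : Type*) :
    Measurable fun (x : α) (_ : ι) => x :=
  measurable_pi_lambda _ fun _ => measurable_id

lemma isProbabilityMeasure_add_smul_dirac {X : Type*} [MeasurableSpace X] {ρ : Measure X}
    (hρ : ρ univ ≤ 1) (x : X) : IsProbabilityMeasure (ρ + (1 - ρ univ) • Measure.dirac x) := by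
  constructor
  rw [Measure.add_apply, Measure.smul_apply, smul_eq_mul, Measure.dirac_apply_of_mem (mem_univ x),
    mul_one, add_tsub_cancel_of_le hρ]

namespace BOInstance

variable (I : BOInstance)

noncomputable def clicks (β : Fin I.nQ → ℝ) : ℝ := ∑ q, landClicks (I.S q) (I.α q) (I.b q) (β q)

noncomputable def cost (β : Fin I.nQ → ℝ) : ℝ := ∑ q, landCost (I.S q) (I.α q) (I.b q) (β q)

noncomputable def maxClicks : ℝ := ∑ q, I.α q 0

noncomputable def maxCost : ℝ := ∑ q, I.α q 0 * I.b q 0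

noncomputable def uniformClicks (x : ℝ) : ℝ := ∑ q, landClicks (I.S q) (I.α q) (I.b q) x

noncomputable def uniformCost (x : ℝ) : ℝ := ∑ q, landCost (I.S q) (I.α q) (I.b q) x

variable {I}

lemma clicks_nonneg (β : Fin I.nQ → ℝ) : 0 ≤ I.clicks β :=
  Finset.sum_nonneg fun q _ => landClicks_nonneg (I.α_anti q) (I.α_last q) _

lemma clicks_le_maxClicks (β : Fin I.nQ → ℝ) : I.clicks β ≤ I.maxClicks :=
  Finset.sum_le_sum fun q _ => landClicks_le (I.α_anti q) _

lemma cost_nonneg (β : Fin I.nQ → ℝ) : 0 ≤ I.cost β :=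
  Finset.sum_nonneg fun q _ =>
    landCost_nonneg (I.α_anti q) (I.α_last q) (I.b_anti q) (I.b_last q) _

lemma cost_le_maxCost (β : Fin I.nQ → ℝ) : I.cost β ≤ I.maxCost :=
  Finset.sum_le_sum fun q _ => landCost_le (I.α_anti q) (I.α_last q) (I.b_anti q) (I.b_last q) _

lemma measurable_clicks : Measurable I.clicks :=
  Finset.measurable_sum _ fun q _ =>
    (landClicks_monotone (I.α_anti q)).measurable.comp (measurable_pi_apply q)

lemma measurable_cost : Measurable I.cost :=
  Finset.measurable_sum _ fun q _ =>
    (landCost_monotone (I.α_anti q) (I.α_last q) (I.b_anti q) (I.b_last q)).measurable.comp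
      (measurable_pi_apply q)

lemma integrable_clicks (ν : Measure (Fin I.nQ → ℝ)) [IsFiniteMeasure ν] :
    Integrable I.clicks ν :=
  .of_bound measurable_clicks.aestronglyMeasurable I.maxClicks <| .of_forall fun β => by
    rw [Real.norm_of_nonneg (clicks_nonneg β)]
    exact clicks_le_maxClicks β

lemma integrable_cost (ν : Measure (Fin I.nQ → ℝ)) [IsFiniteMeasure ν] :
    Integrable I.cost ν :=
  .of_bound measurable_cost.aestronglyMeasurable I.maxCost <| .of_forall fun β => by
    rw [Real.norm_of_nonneg (cost_nonneg β)]
    exact cost_le_maxCost β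

lemma uniformClicks_monotone : Monotone I.uniformClicks := fun _ _ hxy => by
  unfold uniformClicks
  exact Finset.sum_le_sum fun q _ => landClicks_monotone (I.α_anti q) hxy

lemma uniformCost_monotone : Monotone I.uniformCost := fun _ _ hxy => by
  unfold uniformCost
  exact Finset.sum_le_sum fun q _ =>
    landCost_monotone (I.α_anti q) (I.α_last q) (I.b_anti q) (I.b_last q) hxy

lemma uniformCost_zero : I.uniformCost 0 = 0 := by
  unfold uniformCost
  exact Finset.sum_eq_zero fun q _ => landCost_zero (I.b_anti q) (I.b_last q)

lemma uniformCost_le_uniformClicks_mul {x : ℝ} (hx : 0 ≤ x) :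
    I.uniformCost x ≤ I.uniformClicks x * x := by
  rw [uniformCost, uniformClicks, Finset.sum_mul]
  exact Finset.sum_le_sum fun q _ =>
    landCost_le_landClicks_mul (I.α_anti q) (I.α_last q) (I.b_last q) hx

lemma uniformClicks_eventually_eq (x : ℝ) :
    ∀ᶠ y in 𝓝[≥] x, I.uniformClicks y = I.uniformClicks x :=
  (eventually_all.2 fun q => landPos_eventually_eq (I.b q) x).mono fun y hy => by
    simp only [uniformClicks, landClicks, hy]

lemma uniformClicks_eventually_eq_maxClicks :
    ∀ᶠ t in atTop, I.uniformClicks t = I.maxClicks :=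
  (eventually_all.2 fun q => eventually_ge_atTop (I.b q 0)).mono fun t ht => by
    have hwin (q : Fin I.nQ) : landPos (I.S q) (I.b q) t = 0 :=
      Fin.le_zero_iff.1 (landPos_le_of_le (ht q))
    simp only [uniformClicks, maxClicks, landClicks, hwin]

variable (I) in
/-- Truncating at `I.maxClicks` keeps this set nonempty for every `s`. -/
def winningBids (s : ℝ) : Set ℝ := {t | 0 ≤ t ∧ min s I.maxClicks ≤ I.uniformClicks t}

variable (I) in
noncomputable def bidForClicks (s : ℝ) : ℝ := sInf (I.winningBids s)

lemma bddBelow_winningBids (s : ℝ) : BddBelow (I.winningBids s) :=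
  ⟨0, fun _ ht => ht.1⟩

lemma nonempty_winningBids (s : ℝ) : (I.winningBids s).Nonempty :=
  let ⟨t, ht0, ht⟩ := ((eventually_ge_atTop 0).and uniformClicks_eventually_eq_maxClicks).exists
  ⟨t, ht0, ht ▸ min_le_right _ _⟩

lemma bidForClicks_nonneg (s : ℝ) : 0 ≤ I.bidForClicks s :=
  Real.sInf_nonneg fun _ ht => ht.1

lemma bidForClicks_le {s t : ℝ} (ht : 0 ≤ t) (hst : min s I.maxClicks ≤ I.uniformClicks t) :
    I.bidForClicks s ≤ t :=
  csInf_le (bddBelow_winningBids s) ⟨ht, hst⟩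

lemma bidForClicks_monotone : Monotone I.bidForClicks := fun _ _ hss' =>
  csInf_le_csInf (bddBelow_winningBids _) (nonempty_winningBids _) fun _ ⟨ht0, ht⟩ =>
    ⟨ht0, (min_le_min_right _ hss').trans ht⟩

/-- The infimum defining `bidForClicks` is attained, because `uniformClicks` is right-continuous
(competing bids are beaten by bids that are at least as large). -/
lemma min_le_uniformClicks_bidForClicks (s : ℝ) :
    min s I.maxClicks ≤ I.uniformClicks (I.bidForClicks s) := by
  have hglb := isGLB_csInf (nonempty_winningBids (I := I) s) (bddBelow_winningBids s)
  obtain ⟨t, ⟨-, ht⟩, hKt⟩ := ((hglb.frequently_mem (nonempty_winningBids s)).and_eventually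
    (uniformClicks_eventually_eq _)).exists
  exact hKt ▸ ht

variable (I) in
/-- A lower bound for the expected cost of `c` expected clicks. -/
noncomputable def clickCost (c : ℝ) : ℝ := ∫ s in (0)..c, I.bidForClicks s

lemma continuous_clickCost : Continuous I.clickCost :=
  intervalIntegral.continuous_primitive (fun _ _ => bidForClicks_monotone.intervalIntegrable) 0

lemma clickCost_nonneg {c : ℝ} (hc : 0 ≤ c) : 0 ≤ I.clickCost c :=
  intervalIntegral.integral_nonneg hc fun s _ => bidForClicks_nonneg s

lemma bidForClicks_mul_sub_le_clickCost_sub (x y : ℝ) :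
    I.bidForClicks x * (y - x) ≤ I.clickCost y - I.clickCost x := by
  rw [clickCost, clickCost, intervalIntegral.integral_interval_sub_left
    bidForClicks_monotone.intervalIntegrable bidForClicks_monotone.intervalIntegrable]
  exact bidForClicks_monotone.mul_sub_le_intervalIntegral x y

lemma clickCost_monotone : Monotone I.clickCost := fun x y hxy =>
  sub_nonneg.1 ((mul_nonneg (bidForClicks_nonneg x) (sub_nonneg.2 hxy)).trans
    (bidForClicks_mul_sub_le_clickCost_sub x y))

lemma volume_lt_bidForClicks_le {t : ℝ} (ht : 0 ≤ t) (W : ℝ) :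
    volume ({s | t < I.bidForClicks s} ∩ Ioc 0 W) ≤ ENNReal.ofReal (W - I.uniformClicks t) :=
  calc _ ≤ volume (Ioc (I.uniformClicks t) W) := by
        refine measure_mono fun s ⟨hts, _, hsW⟩ => ⟨lt_of_not_ge fun h => ?_, hsW⟩
        exact (not_le.2 hts) (bidForClicks_le ht ((min_le_left _ _).trans h))
    _ = _ := Real.volume_Ioc

/-- Layer-cake argument: for `t > 0`, the click levels `s ≤ clicks β` that need a uniform bid
above `t` are at most the clicks that `β` buys at a price above `t`. -/
lemma clickCost_clicks_le_cost (β : Fin I.nQ → ℝ) : I.clickCost (I.clicks β) ≤ I.cost β := by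
  set price := fun q => I.b q (landPos (I.S q) (I.b q) (β q))
  set G : ℝ → ENNReal := fun t => ∑ q, (Iio (price q)).indicator
    (fun _ => ENNReal.ofReal (landClicks (I.S q) (I.α q) (I.b q) (β q))) t
  have hG : ∀ q ∈ Finset.univ, Measurable ((Iio (price q)).indicator
      fun _ => ENNReal.ofReal (landClicks (I.S q) (I.α q) (I.b q) (β q))) :=
    fun q _ => measurable_const.indicator measurableSet_Iio
  have hlayer : ∀ t ∈ Ioi (0 : ℝ),
      volume.restrict (Ioc 0 (I.clicks β)) {s | t < I.bidForClicks s} ≤ G t := fun t ht =>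
    calc _ ≤ ENNReal.ofReal (I.clicks β - I.uniformClicks t) := by
          rw [Measure.restrict_apply' measurableSet_Ioc]
          exact volume_lt_bidForClicks_le (le_of_lt ht) _
      _ = ENNReal.ofReal (∑ q, (landClicks (I.S q) (I.α q) (I.b q) (β q) -
            landClicks (I.S q) (I.α q) (I.b q) t)) := by
          rw [Finset.sum_sub_distrib, clicks, uniformClicks]
      _ ≤ G t := (Finset.le_sum_of_subadditive _ ENNReal.ofReal_zero.le
            (fun _ _ => ENNReal.ofReal_add_le) _ _).trans
          (Finset.sum_le_sum fun q _ =>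
            ofReal_landClicks_sub_le_indicator (I.α_anti q) (I.α_last q) _ _)
  have hu_int : IntegrableOn I.bidForClicks (Ioc 0 (I.clicks β)) :=
    (intervalIntegrable_iff_integrableOn_Ioc_of_le (clicks_nonneg β)).1
      bidForClicks_monotone.intervalIntegrable
  rw [← ENNReal.ofReal_le_ofReal_iff (cost_nonneg β), clickCost,
    intervalIntegral.integral_of_le (clicks_nonneg β),
    ofReal_integral_eq_lintegral_ofReal hu_int (.of_forall bidForClicks_nonneg),
    lintegral_eq_lintegral_meas_lt _ (.of_forall bidForClicks_nonneg)
      bidForClicks_monotone.measurable.aemeasurable]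
  calc _ ≤ ∫⁻ t in Ioi 0, G t := setLIntegral_mono (Finset.measurable_sum _ hG) hlayer
    _ = ∑ q, ENNReal.ofReal (landCost (I.S q) (I.α q) (I.b q) (β q)) := by
        rw [lintegral_finsetSum _ hG]
        exact Finset.sum_congr rfl fun q _ =>
          lintegral_indicator_eq_ofReal_landCost (I.α_anti q) (I.α_last q) _
    _ = ENNReal.ofReal (I.cost β) := (ENNReal.ofReal_sum_of_nonneg fun q _ =>
        landCost_nonneg (I.α_anti q) (I.α_last q) (I.b_anti q) (I.b_last q) _).symm

lemma clickCost_integral_clicks_le (ν : Measure (Fin I.nQ → ℝ)) [IsProbabilityMeasure ν] :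
    I.clickCost (∫ β, I.clicks β ∂ν) ≤ ∫ β, I.cost β ∂ν := by
  have hint : Integrable (fun β => I.clickCost (I.clicks β)) ν :=
    (integrable_cost ν).mono'
      (continuous_clickCost.measurable.comp measurable_clicks).aestronglyMeasurable
      (.of_forall fun β => by
        rw [Real.norm_of_nonneg (clickCost_nonneg (clicks_nonneg β))]
        exact clickCost_clicks_le_cost β)
  calc _ ≤ ∫ β, I.clickCost (I.clicks β) ∂ν :=
        map_integral_le_integral_of_supporting_line (I.bidForClicks (∫ β, I.clicks β ∂ν))
          (fun y => le_sub_iff_add_le'.1 (bidForClicks_mul_sub_le_clickCost_sub _ y))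
          (integrable_clicks ν) hint
    _ ≤ _ := integral_mono hint (integrable_cost ν) clickCost_clicks_le_cost

variable (I) in
noncomputable def achievableClicks : Set ℝ :=
  {x | ∃ ν : Measure (Fin I.nQ → ℝ), IsProbabilityMeasure ν ∧
    ∫ β, I.cost β ∂ν ≤ I.budget ∧ ∫ β, I.clicks β ∂ν = x}

variable (I) in
noncomputable def perQueryOpt : ℝ := sSup I.achievableClicks

lemma clicks_zero_mem_achievableClicks : I.clicks (fun _ => 0) ∈ I.achievableClicks :=
  ⟨.dirac fun _ => 0, inferInstance, by
    rw [integral_dirac]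
    exact uniformCost_zero.trans_le I.budget_nonneg, integral_dirac _ _⟩

lemma integral_clicks_le_maxClicks (ν : Measure (Fin I.nQ → ℝ)) [IsProbabilityMeasure ν] :
    ∫ β, I.clicks β ∂ν ≤ I.maxClicks :=
  (integral_mono (integrable_clicks ν) (integrable_const _) clicks_le_maxClicks).trans_eq
    (by simp)

lemma bddAbove_achievableClicks : BddAbove I.achievableClicks :=
  ⟨I.maxClicks, fun _ ⟨ν, _, _, hx⟩ => hx ▸ integral_clicks_le_maxClicks ν⟩

lemma perQueryOpt_nonneg : 0 ≤ I.perQueryOpt :=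
  le_csSup_of_le bddAbove_achievableClicks clicks_zero_mem_achievableClicks (clicks_nonneg _)

lemma perQueryOpt_le_maxClicks : I.perQueryOpt ≤ I.maxClicks :=
  csSup_le ⟨_, clicks_zero_mem_achievableClicks⟩ fun _ ⟨ν, _, _, hx⟩ =>
    hx ▸ integral_clicks_le_maxClicks ν

lemma integral_clicks_le_perQueryOpt (ν : Measure (Fin I.nQ → ℝ)) [IsProbabilityMeasure ν]
    (hν : ∫ β, I.cost β ∂ν ≤ I.budget) : ∫ β, I.clicks β ∂ν ≤ I.perQueryOpt :=
  le_csSup bddAbove_achievableClicks ⟨ν, inferInstance, hν, rfl⟩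

lemma clickCost_perQueryOpt_le_budget : I.clickCost I.perQueryOpt ≤ I.budget := by
  rw [perQueryOpt, clickCost_monotone.map_csSup_of_continuousAt continuous_clickCost.continuousAt
    ⟨_, clicks_zero_mem_achievableClicks⟩ bddAbove_achievableClicks]
  refine csSup_le (Set.Nonempty.image _ ⟨_, clicks_zero_mem_achievableClicks⟩) ?_
  rintro _ ⟨_, ⟨ν, hν, hcost, rfl⟩, rfl⟩
  exact (clickCost_integral_clicks_le ν).trans hcost

lemma measurable_effBid (q : Fin I.nQ) : Measurable fun v => effBid I v q := by
  have : (fun v => effBid I v q) = (I.nbrs q).sup' (I.nbrs_nonempty q) fun k v => v k := by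
    funext v
    rw [Finset.sup'_apply]
    rfl
  rw [this]
  exact Finset.measurable_sup' _ fun k _ => measurable_pi_apply k

lemma effBid_const (x : ℝ) (q : Fin I.nQ) : effBid I (fun _ => x) q = x :=
  Finset.sup'_const _ x

lemma spendD_map_const (ρ : Measure ℝ) :
    spendD I (ρ.map fun x _ => x) = ∫ x, I.uniformCost x ∂ρ := by
  have hspend : Measurable (spendVec I) := Finset.measurable_sum _ fun q _ =>
    (landCost_monotone (I.α_anti q) (I.α_last q) (I.b_anti q) (I.b_last q)).measurable.comp
      (measurable_effBid q)
  rw [spendD, integral_map (measurable_const_pi _).aemeasurable hspend.aestronglyMeasurable]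
  simp only [spendVec, effBid_const, uniformCost]

lemma trafficD_map_const (ρ : Measure ℝ) :
    trafficD I (ρ.map fun x _ => x) = ∫ x, I.uniformClicks x ∂ρ := by
  have htraffic : Measurable (trafficVec I) := Finset.measurable_sum _ fun q _ =>
    (landClicks_monotone (I.α_anti q)).measurable.comp (measurable_effBid q)
  rw [trafficD, integral_map (measurable_const_pi _).aemeasurable htraffic.aestronglyMeasurable]
  simp only [trafficVec, effBid_const, uniformClicks]

lemma isUniform_map_const (ρ : Measure ℝ) [IsProbabilityMeasure ρ] (hρ : ∀ᵐ x ∂ρ, 0 ≤ x) :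
    IsUniform I (ρ.map fun x _ => x) := by
  have hT : MeasurableSet {v : Fin I.nK → ℝ | ∀ k, 0 ≤ v k ∧ ∀ k', v k = v k'} := by
    simp only [ofPred_forall, ofPred_and]
    exact .iInter fun k => (measurableSet_le measurable_const (measurable_pi_apply k)).inter
      (.iInter fun k' => measurableSet_eq_fun (measurable_pi_apply k) (measurable_pi_apply k'))
  have hunif : ∀ᵐ v ∂ρ.map fun x (_ : Fin I.nK) => x, ∃ x : ℝ, 0 ≤ x ∧ v = fun _ => x := by
    refine ((ae_map_iff (measurable_const_pi _).aemeasurable hT).2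
      (hρ.mono fun x hx _ => ⟨hx, fun _ => rfl⟩)).mono fun v hv => ?_
    rcases isEmpty_or_nonempty (Fin I.nK) with _ | ⟨⟨k₀⟩⟩
    · exact ⟨0, le_rfl, funext isEmptyElim⟩
    · exact ⟨v k₀, (hv k₀).1, funext fun k => (hv k).2 k₀⟩
  refine ⟨⟨Measure.isProbabilityMeasure_map (measurable_const_pi _).aemeasurable, hunif.mono ?_⟩,
    hunif⟩
  rintro _ ⟨x, hx, rfl⟩ _
  exact hx

variable (I) in
noncomputable def clickDensity (s : ℝ) : ℝ := (I.uniformClicks (I.bidForClicks s))⁻¹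

variable (I) in
noncomputable def randomBid (V : ℝ) : Measure ℝ :=
  ((volume.restrict (Ioc (V / Real.exp 1) V)).withDensity
    fun s => ENNReal.ofReal (I.clickDensity s)).map I.bidForClicks

variable (I) in
noncomputable def bidDistribution (V : ℝ) : Measure ℝ :=
  I.randomBid V + (1 - I.randomBid V univ) • Measure.dirac 0

lemma measurable_clickDensity : Measurable I.clickDensity :=
  (uniformClicks_monotone.comp bidForClicks_monotone).measurable.inv

lemma clickDensity_nonneg (s : ℝ) : 0 ≤ I.clickDensity s :=
  inv_nonneg.2 (clicks_nonneg _)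

lemma clickDensity_mul_uniformClicks_le_one (s : ℝ) :
    I.clickDensity s * I.uniformClicks (I.bidForClicks s) ≤ 1 :=
  inv_mul_le_one_of_le₀ le_rfl (clicks_nonneg _)

lemma le_uniformClicks_bidForClicks {s : ℝ} (hs : s ≤ I.maxClicks) :
    s ≤ I.uniformClicks (I.bidForClicks s) :=
  (min_eq_left hs).symm.trans_le (min_le_uniformClicks_bidForClicks s)

lemma clickDensity_mul_uniformClicks_eq_one {s : ℝ} (hs : 0 < s) (hsC : s ≤ I.maxClicks) :
    I.clickDensity s * I.uniformClicks (I.bidForClicks s) = 1 :=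
  inv_mul_cancel₀ (hs.trans_le (le_uniformClicks_bidForClicks hsC)).ne'

lemma clickDensity_le_inv {s : ℝ} (hs : 0 < s) (hsC : s ≤ I.maxClicks) :
    I.clickDensity s ≤ s⁻¹ :=
  inv_anti₀ hs (le_uniformClicks_bidForClicks hsC)

lemma randomBid_univ_le_one {V : ℝ} (hV0 : 0 ≤ V) (hVC : V ≤ I.maxClicks) :
    I.randomBid V univ ≤ 1 := by
  rw [randomBid, Measure.map_apply bidForClicks_monotone.measurable .univ, preimage_univ,
    withDensity_apply _ .univ, Measure.restrict_univ]
  rcases hV0.eq_or_lt with rfl | hV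
  · simp
  have ha : 0 < V / Real.exp 1 := div_pos hV (Real.exp_pos 1)
  have hle : V / Real.exp 1 ≤ V := div_le_self hV0 (Real.one_le_exp zero_le_one)
  have hinv : IntegrableOn (fun s : ℝ => s⁻¹) (Ioc (V / Real.exp 1) V) :=
    (intervalIntegrable_iff_integrableOn_Ioc_of_le hle).1
      (intervalIntegral.intervalIntegrable_inv (fun s hs => (ha.trans_le
        (uIcc_of_le hle ▸ hs).1).ne') continuousOn_id)
  calc ∫⁻ s in Ioc (V / Real.exp 1) V, ENNReal.ofReal (I.clickDensity s)
      ≤ ∫⁻ s in Ioc (V / Real.exp 1) V, ENNReal.ofReal s⁻¹ :=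
        setLIntegral_mono' measurableSet_Ioc fun s hs =>
          ENNReal.ofReal_le_ofReal (clickDensity_le_inv (ha.trans hs.1) (hs.2.trans hVC))
    _ = ENNReal.ofReal (∫ s in (V / Real.exp 1)..V, s⁻¹) := by
        rw [intervalIntegral.integral_of_le hle, ofReal_integral_eq_lintegral_ofReal hinv
          ((ae_restrict_iff' measurableSet_Ioc).2 (.of_forall fun s hs =>
            inv_nonneg.2 (ha.trans hs.1).le))]
    _ = 1 := by rw [integral_inv_of_pos ha hV, div_div_cancel₀ hV.ne', Real.log_exp,
        ENNReal.ofReal_one]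

lemma ae_nonneg_bidDistribution (V : ℝ) : ∀ᵐ x ∂I.bidDistribution V, 0 ≤ x :=
  ae_add_measure_iff.2
    ⟨(ae_map_iff bidForClicks_monotone.measurable.aemeasurable measurableSet_Ici).2
      (.of_forall bidForClicks_nonneg),
    Measure.ae_smul_measure ((ae_dirac_iff measurableSet_Ici).2 le_rfl) _⟩

lemma integral_randomBid {f : ℝ → ℝ} (hf : Measurable f) (V : ℝ) :
    ∫ x, f x ∂I.randomBid V =
      ∫ s in Ioc (V / Real.exp 1) V, I.clickDensity s * f (I.bidForClicks s) := by
  rw [randomBid, integral_map bidForClicks_monotone.measurable.aemeasurable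
    hf.aestronglyMeasurable]
  refine (integral_withDensity_eq_integral_smul measurable_clickDensity.real_toNNReal _).trans
    (integral_congr_ae (.of_forall fun s => ?_))
  simp only [NNReal.smul_def, Real.coe_toNNReal _ (clickDensity_nonneg s), smul_eq_mul]

lemma integral_bidDistribution {V : ℝ} (hV0 : 0 ≤ V) (hVC : V ≤ I.maxClicks) {f : ℝ → ℝ}
    (hf : Measurable f) {C : ℝ} (hC : ∀ x, ‖f x‖ ≤ C) :
    ∫ x, f x ∂I.bidDistribution V =
      ∫ x, f x ∂I.randomBid V + (1 - I.randomBid V univ).toReal • f 0 := by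
  have : IsFiniteMeasure (I.randomBid V) :=
    ⟨(randomBid_univ_le_one hV0 hVC).trans_lt ENNReal.one_lt_top⟩
  have hint : ∀ (ρ : Measure ℝ) [IsFiniteMeasure ρ], Integrable f ρ := fun ρ _ =>
    .of_bound hf.aestronglyMeasurable C (.of_forall hC)
  rw [bidDistribution, integral_add_measure (hint _)
    ((hint _).smul_measure (ENNReal.sub_ne_top ENNReal.one_ne_top)), integral_smul_measure,
    integral_dirac]

lemma integral_uniformCost_randomBid_le {V : ℝ} (hV0 : 0 ≤ V) :
    ∫ x, I.uniformCost x ∂I.randomBid V ≤ I.clickCost V := by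
  have hsub : Ioc (V / Real.exp 1) V ⊆ Ioc 0 V :=
    Ioc_subset_Ioc_left (div_nonneg hV0 (Real.exp_pos 1).le)
  have hu_int : IntegrableOn I.bidForClicks (Ioc 0 V) :=
    (intervalIntegrable_iff_integrableOn_Ioc_of_le hV0).1 bidForClicks_monotone.intervalIntegrable
  have hnonneg (s : ℝ) : 0 ≤ I.clickDensity s * I.uniformCost (I.bidForClicks s) :=
    mul_nonneg (clickDensity_nonneg s) (cost_nonneg _)
  have hle (s : ℝ) : I.clickDensity s * I.uniformCost (I.bidForClicks s) ≤ I.bidForClicks s :=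
    calc _ ≤ I.clickDensity s * (I.uniformClicks (I.bidForClicks s) * I.bidForClicks s) :=
          mul_le_mul_of_nonneg_left (uniformCost_le_uniformClicks_mul (bidForClicks_nonneg s))
            (clickDensity_nonneg s)
      _ = I.clickDensity s * I.uniformClicks (I.bidForClicks s) * I.bidForClicks s :=
          (mul_assoc _ _ _).symm
      _ ≤ I.bidForClicks s := mul_le_of_le_one_left (bidForClicks_nonneg s)
          (clickDensity_mul_uniformClicks_le_one s)
  rw [integral_randomBid uniformCost_monotone.measurable, clickCost,
    intervalIntegral.integral_of_le hV0]
  calc _ ≤ ∫ s in Ioc (V / Real.exp 1) V, I.bidForClicks s :=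
        setIntegral_mono_on ((hu_int.mono_set hsub).mono'
          (measurable_clickDensity.mul (uniformCost_monotone.measurable.comp
            bidForClicks_monotone.measurable)).aestronglyMeasurable
          (.of_forall fun s => (Real.norm_of_nonneg (hnonneg s)).trans_le (hle s)))
          (hu_int.mono_set hsub) measurableSet_Ioc fun s _ => hle s
    _ ≤ ∫ s in Ioc 0 V, I.bidForClicks s :=
        setIntegral_mono_set hu_int (.of_forall bidForClicks_nonneg) hsub.eventuallyLE

lemma integral_uniformClicks_randomBid {V : ℝ} (hV0 : 0 ≤ V) (hVC : V ≤ I.maxClicks) :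
    ∫ x, I.uniformClicks x ∂I.randomBid V = (1 - 1 / Real.exp 1) * V := by
  have ha : 0 ≤ V / Real.exp 1 := div_nonneg hV0 (Real.exp_pos 1).le
  rw [integral_randomBid uniformClicks_monotone.measurable,
    setIntegral_congr_fun measurableSet_Ioc (g := fun _ => 1) fun s hs =>
      clickDensity_mul_uniformClicks_eq_one (ha.trans_lt hs.1) (hs.2.trans hVC),
    setIntegral_const, Real.volume_real_Ioc_of_le (div_le_self hV0 (Real.one_le_exp zero_le_one)),
    smul_eq_mul, mul_one]
  ring

theorem exists_isUniform_spendD_le_budget_le_trafficD {V : ℝ} (hV0 : 0 ≤ V)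
    (hVC : V ≤ I.maxClicks) (hVB : I.clickCost V ≤ I.budget) :
    ∃ μ, IsUniform I μ ∧ spendD I μ ≤ I.budget ∧ (1 - 1 / Real.exp 1) * V ≤ trafficD I μ := by
  have : IsProbabilityMeasure (I.bidDistribution V) :=
    isProbabilityMeasure_add_smul_dirac (randomBid_univ_le_one hV0 hVC) 0
  refine ⟨(I.bidDistribution V).map fun x _ => x,
    isUniform_map_const _ (ae_nonneg_bidDistribution V), ?_, ?_⟩
  · rw [spendD_map_const, integral_bidDistribution hV0 hVC uniformCost_monotone.measurable
      fun x => (Real.norm_of_nonneg (cost_nonneg _)).trans_le (cost_le_maxCost _),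
      uniformCost_zero, smul_zero, add_zero]
    exact (integral_uniformCost_randomBid_le hV0).trans hVB
  · rw [trafficD_map_const, integral_bidDistribution hV0 hVC uniformClicks_monotone.measurable
      fun x => (Real.norm_of_nonneg (clicks_nonneg _)).trans_le (clicks_le_maxClicks _),
      integral_uniformClicks_randomBid hV0 hVC]
    exact le_add_of_nonneg_right (smul_nonneg ENNReal.toReal_nonneg (clicks_nonneg _))

end BOInstance

/-- There is a uniform strategy within budget whose traffic is at least a
`(1 - 1/e)` fraction of the per-query optimum: for every random tuple of
nonnegative per-query bids whose expected total cost is within budget, the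
strategy obtains at least a `(1 - 1/e)` fraction of its expected total clicks. -/
theorem uniform_one_minus_inv_e_approximation (I : BOInstance) :
    ∃ μ : Measure (Fin I.nK → ℝ),
      IsUniform I μ ∧ spendD I μ ≤ I.budget ∧
      ∀ ν : Measure (Fin I.nQ → ℝ), IsProbabilityMeasure ν →
        (∀ᵐ β ∂ν, ∀ q, 0 ≤ β q) →
        (∫ β, ∑ q, landCost (I.S q) (I.α q) (I.b q) (β q) ∂ν) ≤ I.budget →
        (1 - 1 / Real.exp 1) *
            (∫ β, ∑ q, landClicks (I.S q) (I.α q) (I.b q) (β q) ∂ν) ≤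
          trafficD I μ := by
  obtain ⟨μ, hμ, hspend, htraffic⟩ := I.exists_isUniform_spendD_le_budget_le_trafficD
    I.perQueryOpt_nonneg I.perQueryOpt_le_maxClicks I.clickCost_perQueryOpt_le_budget
  refine ⟨μ, hμ, hspend, fun ν _ _ hcost => ?_⟩
  have hfactor : 0 ≤ 1 - 1 / Real.exp 1 :=
    sub_nonneg.2 ((div_le_one (Real.exp_pos 1)).2 (Real.one_le_exp zero_le_one))
  exact (mul_le_mul_of_nonneg_left (I.integral_clicks_le_perQueryOpt ν hcost) hfactor).trans
    htraffic
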